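/- If x : Fin n → ℝ is a solution of the two-sided max-plus system, i.e. (A⊗x) i = (B⊗x) i for all i, then φ₀(φ₀(x)) = φ₀(x); that is, φ₀(x) is a fixed point of the alternating-method step. -/

import Mathlib

open Finset

/-- Max-plus product of a real matrix with a real vector:
`(mpMul M x) i = max_k (M i k + x k)`. -/
noncomputable def mpMul {p n : ℕ} [NeZero p] [NeZero n]
    (M : Fin p → Fin n → ℝ) (x : Fin n → ℝ) : Fin p → ℝ :=
  fun i => univ.sup' univ_nonempty fun k => M i k + x k

/-- One step of the alternating method for the system `A ⊗ x = B ⊗ x`: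
`φ₀(x) j = min_i ( -max(A i j, B i j) + min((A⊗x) i, (B⊗x) i) )`. -/
noncomputable def phi0 {m n : ℕ} [NeZero m] [NeZero n]
    (A B : Fin m → Fin n → ℝ) (x : Fin n → ℝ) : Fin n → ℝ :=
  fun j => univ.inf' univ_nonempty fun i =>
    (-(max (A i j) (B i j))) + min (mpMul A x i) (mpMul B x i)

/-
`φ₀(x)` is the greatest vector `y` with `A ⊗ y ≤ min(A ⊗ x, B ⊗ x)` and `B ⊗ y ≤ min(A ⊗ x, B ⊗ x)`.
If `x` is a solution then `x` itself is such a vector, so `x ≤ φ₀(x)`, and monotonicity of `⊗` squeezes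
`A ⊗ φ₀(x) = A ⊗ x = B ⊗ x = B ⊗ φ₀(x)`. As `φ₀` sees its argument only through `min(A ⊗ ·, B ⊗ ·)`,
this gives `φ₀(φ₀(x)) = φ₀(x)`.
-/

section MaxPlus

variable {p m n : ℕ} [NeZero p] [NeZero m] [NeZero n]

theorem le_mpMul (M : Fin p → Fin n → ℝ) (x : Fin n → ℝ) (i : Fin p) (k : Fin n) :
    M i k + x k ≤ mpMul M x i :=
  le_sup' (fun k => M i k + x k) (mem_univ k)

theorem mpMul_le_iff (M : Fin p → Fin n → ℝ) (x : Fin n → ℝ) (i : Fin p) (c : ℝ) :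
    mpMul M x i ≤ c ↔ ∀ k, M i k + x k ≤ c := by
  simp [mpMul, sup'_le_iff]

theorem mpMul_mono (M : Fin p → Fin n → ℝ) : Monotone (mpMul M) := fun x y hxy i =>
  (mpMul_le_iff M x i _).2 fun k => (add_le_add_right (hxy k) _).trans (le_mpMul M y i k)

theorem phi0_comm (A B : Fin m → Fin n → ℝ) : phi0 A B = phi0 B A := by
  funext x j
  simp only [phi0, max_comm, min_comm]

theorem phi0_le (A B : Fin m → Fin n → ℝ) (x : Fin n → ℝ) (i : Fin m) (j : Fin n) :
    phi0 A B x j ≤ -max (A i j) (B i j) + min (mpMul A x i) (mpMul B x i) :=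
  inf'_le _ (mem_univ i)

theorem le_phi0_iff (A B : Fin m → Fin n → ℝ) (x : Fin n → ℝ) (j : Fin n) (c : ℝ) :
    c ≤ phi0 A B x j ↔ ∀ i, c ≤ -max (A i j) (B i j) + min (mpMul A x i) (mpMul B x i) := by
  simp [phi0, le_inf'_iff]

theorem phi0_congr {A B : Fin m → Fin n → ℝ} {x y : Fin n → ℝ}
    (h : ∀ i, min (mpMul A x i) (mpMul B x i) = min (mpMul A y i) (mpMul B y i)) :
    phi0 A B x = phi0 A B y := by
  funext j
  simp only [phi0, h]

theorem mpMul_phi0_le (A B : Fin m → Fin n → ℝ) (x : Fin n → ℝ) (i : Fin m) :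
    mpMul A (phi0 A B x) i ≤ min (mpMul A x i) (mpMul B x i) := by
  refine (mpMul_le_iff _ _ _ _).2 fun k => ?_
  have := phi0_le A B x i k
  have := le_max_left (A i k) (B i k)
  linarith

theorem le_phi0_of_solution {A B : Fin m → Fin n → ℝ} {x : Fin n → ℝ}
    (hx : ∀ i, mpMul A x i = mpMul B x i) : x ≤ phi0 A B x := fun j => by
  refine (le_phi0_iff A B x j _).2 fun i => ?_
  rw [← hx i, min_self, le_neg_add_iff_add_le, ← max_add_add_right, max_le_iff]
  exact ⟨le_mpMul A x i j, hx i ▸ le_mpMul B x i j⟩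

theorem mpMul_phi0_of_solution {A B : Fin m → Fin n → ℝ} {x : Fin n → ℝ}
    (hx : ∀ i, mpMul A x i = mpMul B x i) : mpMul A (phi0 A B x) = mpMul A x :=
  le_antisymm (fun i => (mpMul_phi0_le A B x i).trans (min_le_left _ _))
    (mpMul_mono A (le_phi0_of_solution hx))

end MaxPlus

theorem stmt1 {m n : ℕ} [NeZero m] [NeZero n]
    (A B : Fin m → Fin n → ℝ) (x : Fin n → ℝ)
    (hx : ∀ i, mpMul A x i = mpMul B x i) :
    phi0 A B (phi0 A B x) = phi0 A B x := by
  have hA : mpMul A (phi0 A B x) = mpMul A x := mpMul_phi0_of_solution hx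
  have hB : mpMul B (phi0 A B x) = mpMul B x := by
    rw [phi0_comm]
    exact mpMul_phi0_of_solution fun i => (hx i).symm
  exact phi0_congr fun i => by rw [hA, hB]
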